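/- arXiv:2108.00445 — 4 statements merged into one kernel-verified Lean document; each statement's English description precedes it below -/
import Mathlib

section
/- Let U : ℝ^{n×n} → ℝ be a C¹ function invariant under left and right multiplication by orthogonal matrices, i.e. U(RPS) = U(P) for all orthogonal R, S. If P has singular value decomposition P = RΛSᵀ with distinct singular values, then the gradient matrix ∂U/∂P at P equals R·D·Sᵀ, where D is the diagonal matrix whose entries are ∂U/∂P_{ii} evaluated at the diagonal matrix Λ. -/
open Matrix

attribute [local instance] Matrix.normedAddCommGroup Matrix.normedSpace

/-!
By the chain rule, invariance gives `dU(QXT)(QAT) = dU(X)(A)` for orthogonal `Q`, `T`, so the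
gradient transforms as `∇U(P) = R ∇U(Λ) Sᵀ`. Conjugating by the reflection that flips the sign of
the `j`-th coordinate fixes the diagonal matrix `Λ` and negates `E_ij` for `i ≠ j`; hence the
off-diagonal partial derivatives at `Λ` vanish and `∇U(Λ)` is diagonal.
-/

theorem fderiv_apply_map_of_invariant {𝕜 E F : Type*} [NontriviallyNormedField 𝕜]
    [NormedAddCommGroup E] [NormedSpace 𝕜 E] [NormedAddCommGroup F] [NormedSpace 𝕜 F]
    {U : E → F} (L : E →L[𝕜] E) (hUL : ∀ x, U (L x) = U x) {x : E}
    (hU : DifferentiableAt 𝕜 U (L x)) (v : E) :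
    fderiv 𝕜 U (L x) (L v) = fderiv 𝕜 U x v := by
  have hcomp : U ∘ L = U := funext hUL
  calc fderiv 𝕜 U (L x) (L v) = fderiv 𝕜 (U ∘ L) x v := by
        rw [fderiv_comp x hU L.differentiableAt, L.fderiv]; rfl
    _ = fderiv 𝕜 U x v := by rw [hcomp]

namespace Matrix

variable {𝕜 m n : Type*}

section CommRing

variable [CommRing 𝕜] [DecidableEq m] [DecidableEq n]

def gradMatrix (f : Matrix m n 𝕜 →ₗ[𝕜] 𝕜) : Matrix m n 𝕜 :=
  of fun i j => f (single i j 1)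

theorem gradMatrix_eq_diagonal {f : Matrix n n 𝕜 →ₗ[𝕜] 𝕜}
    (hoff : ∀ i j, i ≠ j → f (single i j 1) = 0) :
    gradMatrix f = diagonal fun i => f (single i i 1) := by
  ext i j
  by_cases hij : i = j
  · subst hij; simp [gradMatrix]
  · simp [gradMatrix, hoff i j hij, hij]

variable [Fintype m] [Fintype n]

theorem apply_eq_sum_gradMatrix (f : Matrix m n 𝕜 →ₗ[𝕜] 𝕜) (M : Matrix m n 𝕜) :
    f M = ∑ i, ∑ j, M i j * gradMatrix f i j := by
  conv_lhs => rw [matrix_eq_sum_single M]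
  simp only [map_sum]
  refine Finset.sum_congr rfl fun i _ => Finset.sum_congr rfl fun j _ => ?_
  rw [gradMatrix, of_apply, ← smul_eq_mul, ← map_smul, smul_single, smul_eq_mul, mul_one]

theorem mul_single_one_mul_apply {l o : Type*} (Q : Matrix l m 𝕜) (T : Matrix n o 𝕜)
    (i : m) (j : n) (k : l) (p : o) :
    (Q * single i j (1 : 𝕜) * T) k p = Q k i * T j p := by
  simp [mul_apply, single, ite_and]

theorem gradMatrix_comp_mul_mul (f : Matrix m n 𝕜 →ₗ[𝕜] 𝕜) (Q : Matrix m m 𝕜)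
    (T : Matrix n n 𝕜) :
    (of fun i j => f (Q * single i j (1 : 𝕜) * T)) = Qᵀ * gradMatrix f * Tᵀ := by
  ext i j
  rw [of_apply, apply_eq_sum_gradMatrix f]
  simp only [mul_single_one_mul_apply]
  simp only [mul_apply, transpose_apply, Finset.sum_mul]
  rw [Finset.sum_comm]
  exact Finset.sum_congr rfl fun l _ => Finset.sum_congr rfl fun k _ => by ring

theorem diagonal_mul_self_eq_one {s : n → 𝕜} (hs : ∀ k, s k * s k = 1) :
    diagonal s * diagonal s = 1 := by
  rw [diagonal_mul_diagonal, ← diagonal_one]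
  exact congrArg diagonal (funext hs)

theorem diagonal_mul_diagonal_mul_self {s : n → 𝕜} (hs : ∀ k, s k * s k = 1) (a : n → 𝕜) :
    diagonal s * diagonal a * diagonal s = diagonal a := by
  rw [diagonal_mul_diagonal, diagonal_mul_diagonal]
  congr 1; funext k
  linear_combination a k * hs k

theorem diagonal_mul_single_mul_diagonal (s : n → 𝕜) (i j : n) (c : 𝕜) :
    diagonal s * single i j c * diagonal s = single i j (s i * c * s j) := by
  ext k l
  rw [mul_diagonal, diagonal_mul]
  by_cases h : i = k ∧ j = l
  · obtain ⟨rfl, rfl⟩ := h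
    simp only [single_apply_same]
  · simp only [single_apply_of_ne (h := h), mul_zero, zero_mul]

end CommRing

section Calculus

variable [Fintype m] [Fintype n] [NontriviallyNormedField 𝕜]

theorem fderiv_mul_mul_apply {F : Type*} [NormedAddCommGroup F] [NormedSpace 𝕜 F]
    {U : Matrix m n 𝕜 → F} {Q : Matrix m m 𝕜} {T : Matrix n n 𝕜}
    (hinv : ∀ X, U (Q * X * T) = U X) {X : Matrix m n 𝕜}
    (hU : DifferentiableAt 𝕜 U (Q * X * T)) (A : Matrix m n 𝕜) :
    fderiv 𝕜 U (Q * X * T) (Q * A * T) = fderiv 𝕜 U X A :=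
  fderiv_apply_map_of_invariant
    ⟨mulRightLinearMap m 𝕜 T ∘ₗ mulLeftLinearMap n 𝕜 Q,
      (continuous_const.matrix_mul continuous_id).matrix_mul continuous_const⟩ hinv hU A

theorem fderiv_diagonal_single_eq_zero [CharZero 𝕜] [DecidableEq n] {U : Matrix n n 𝕜 → 𝕜}
    (hinv : ∀ s : n → 𝕜, (∀ k, s k * s k = 1) → ∀ X, U (diagonal s * X * diagonal s) = U X)
    {a : n → 𝕜} (hU : DifferentiableAt 𝕜 U (diagonal a)) {i j : n} (hij : i ≠ j) :
    fderiv 𝕜 U (diagonal a) (single i j 1) = 0 := by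
  set s : n → 𝕜 := Function.update 1 j (-1)
  have hs : ∀ k, s k * s k = 1 := fun k => by
    by_cases hk : k = j <;> simp [s, hk]
  have hflip : diagonal s * single i j 1 * diagonal s = -single i j 1 := by
    simp [diagonal_mul_single_mul_diagonal, s, hij, single_neg]
  have hderiv := fderiv_mul_mul_apply (hinv s hs) (X := diagonal a)
    (by rwa [diagonal_mul_diagonal_mul_self hs]) (single i j 1)
  rw [diagonal_mul_diagonal_mul_self hs, hflip, map_neg] at hderiv
  exact CharZero.neg_eq_self_iff.mp hderiv

end Calculus

end Matrix

theorem stmt_0_general (n : ℕ) (U : Matrix (Fin n) (Fin n) ℝ → ℝ)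
    (hU : ContDiff ℝ 1 U)
    (hinv : ∀ R S P : Matrix (Fin n) (Fin n) ℝ,
      R * Matrix.transpose R = 1 → Matrix.transpose R * R = 1 →
      S * Matrix.transpose S = 1 → Matrix.transpose S * S = 1 →
      U (R * P * S) = U P)
    (P R S : Matrix (Fin n) (Fin n) ℝ) (a : Fin n → ℝ)
    (hR' : Matrix.transpose R * R = 1)
    (hS' : Matrix.transpose S * S = 1)
    (hSVD : P = R * Matrix.diagonal a * Matrix.transpose S) :
    (Matrix.of fun i j =>
        fderiv ℝ U P (Matrix.single i j 1))
      = R * Matrix.diagonal (fun i =>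
          fderiv ℝ U (Matrix.diagonal a) (Matrix.single i i 1))
        * Matrix.transpose S := by
  have hdiff : ∀ X, DifferentiableAt ℝ U X := fun X =>
    (hU.differentiable one_ne_zero).differentiableAt
  have hΛ : Rᵀ * P * S = diagonal a := by
    rw [hSVD, ← Matrix.mul_assoc, ← Matrix.mul_assoc, hR', Matrix.one_mul, Matrix.mul_assoc, hS',
      Matrix.mul_one]
  have hRS : ∀ X, U (Rᵀ * X * S) = U X := fun X =>
    hinv _ _ X (by rwa [transpose_transpose])
      (by rw [transpose_transpose]; exact mul_eq_one_comm.mp hR') (mul_eq_one_comm.mp hS') hS'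
  have hflip : ∀ s : Fin n → ℝ, (∀ k, s k * s k = 1) →
      ∀ X, U (diagonal s * X * diagonal s) = U X := fun s hs X => by
    have hso : diagonal s * (diagonal s)ᵀ = 1 := by
      rw [diagonal_transpose, diagonal_mul_self_eq_one hs]
    have hso' : (diagonal s)ᵀ * diagonal s = 1 := by
      rw [diagonal_transpose, diagonal_mul_self_eq_one hs]
    exact hinv _ _ X hso hso' hso hso'
  set f := fderiv ℝ U (diagonal a)
  calc (of fun i j => fderiv ℝ U P (single i j 1))
      = of fun i j => f.toLinearMap (Rᵀ * single i j 1 * S) := by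
        ext i j
        rw [of_apply, of_apply, ContinuousLinearMap.coe_coe,
          ← fderiv_mul_mul_apply hRS (hdiff _) (X := P), hΛ]
    _ = R * gradMatrix f.toLinearMap * Sᵀ := by
        rw [gradMatrix_comp_mul_mul, transpose_transpose]
    _ = R * diagonal (fun i => f (single i i 1)) * Sᵀ := by
        rw [gradMatrix_eq_diagonal fun i j hij =>
          fderiv_diagonal_single_eq_zero hflip (hdiff _) hij]
        rfl

/-- If U : ℝ^{n×n} → ℝ is C¹ and invariant under left and right multiplication by
orthogonal matrices, and P = RΛSᵀ is a singular value decomposition with distinct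
(positive) singular values, then the gradient matrix (∂U/∂P_{ij}) at P equals
R·D·Sᵀ, where D = diag{∂U/∂P_{ii} evaluated at Λ}. -/
theorem stmt_0 (n : ℕ) (U : Matrix (Fin n) (Fin n) ℝ → ℝ)
    (hU : ContDiff ℝ 1 U)
    (hinv : ∀ R S P : Matrix (Fin n) (Fin n) ℝ,
      R * Matrix.transpose R = 1 → Matrix.transpose R * R = 1 →
      S * Matrix.transpose S = 1 → Matrix.transpose S * S = 1 →
      U (R * P * S) = U P)
    (P R S : Matrix (Fin n) (Fin n) ℝ) (a : Fin n → ℝ)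
    (hR : R * Matrix.transpose R = 1) (hR' : Matrix.transpose R * R = 1)
    (hS : S * Matrix.transpose S = 1) (hS' : Matrix.transpose S * S = 1)
    (hapos : ∀ i, 0 < a i) (hadist : Function.Injective a)
    (hSVD : P = R * Matrix.diagonal a * Matrix.transpose S) :
    (Matrix.of fun i j =>
        fderiv ℝ U P (Matrix.single i j 1))
      = R * Matrix.diagonal (fun i =>
          fderiv ℝ U (Matrix.diagonal a) (Matrix.single i i 1))
        * Matrix.transpose S :=
  stmt_0_general n U hU hinv P R S a hR' hS' hSVD
end

section
/- Let V(z,t) be holomorphic in z on the fluid domain and satisfy the complex Hopf equation V_t + V V_z = 0. Define u − iv = V and p = −v². Then the real velocity field (u,v) and pressure p satisfy the incompressible Euler equations u_t + u u_x + v u_y + p_x = 0, v_t + u v_x + v v_y + p_y = 0, u_x + v_y = 0. -/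
open Complex

/-! With `V_z = u_x - i v_x`, the Cauchy–Riemann equations for `V = u - i v` read
`u_x + v_y = 0` and `u_y = v_x`. Hence `v u_y + p_x = v v_x - 2 v v_x = -v v_x`, and the first
momentum equation is the real part `u_t + u u_x - v v_x = 0` of the Hopf equation; likewise the
second one is minus its imaginary part. -/

section DirectionalDerivatives

variable {f : ℂ → ℂ} {f' : ℂ} {x y : ℝ}

theorem HasDerivAt.comp_horizontal (h : HasDerivAt f f' (x + y * I)) :
    HasDerivAt (fun s : ℝ => f (s + y * I)) f' x :=
  (h.comp_add_const (x : ℂ) (y * I)).comp_ofReal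

theorem HasDerivAt.comp_vertical (h : HasDerivAt f f' (x + y * I)) :
    HasDerivAt (fun s : ℝ => f (x + s * I)) (f' * I) y := by
  have hline : HasDerivAt (fun w : ℂ => x + w * I) I y := by
    simpa using ((hasDerivAt_id (y : ℂ)).mul_const I).const_add (x : ℂ)
  exact (h.comp (y : ℂ) hline).comp_ofReal

end DirectionalDerivatives

section RealAndImaginaryParts

variable {g : ℝ → ℂ} {g' : ℂ} {s : ℝ}

theorem HasDerivAt.re (h : HasDerivAt g g' s) : HasDerivAt (fun s => (g s).re) g'.re s :=
  reCLM.hasFDerivAt.comp_hasDerivAt s h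

theorem HasDerivAt.im (h : HasDerivAt g g' s) : HasDerivAt (fun s => (g s).im) g'.im s :=
  imCLM.hasFDerivAt.comp_hasDerivAt s h

end RealAndImaginaryParts

/-- If V(z,t) is holomorphic in z on an open fluid domain Ω and satisfies the
complex Hopf equation V_t + V V_z = 0, then with u − iv = V and p = −v², the
real fields (u,v,p) satisfy the incompressible Euler equations
u_t + u u_x + v u_y + p_x = 0, v_t + u v_x + v v_y + p_y = 0, u_x + v_y = 0. -/
theorem stmt_9 (Ω : Set ℂ) (hΩ : IsOpen Ω)
    (V Vt : ℂ → ℝ → ℂ)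
    (hhol : ∀ t : ℝ, DifferentiableOn ℂ (fun z => V z t) Ω)
    (hVt : ∀ z ∈ Ω, ∀ t : ℝ, HasDerivAt (fun s => V z s) (Vt z t) t)
    (hHopf : ∀ z ∈ Ω, ∀ t : ℝ,
      Vt z t + V z t * deriv (fun z' => V z' t) z = 0)
    (u v p : ℝ → ℝ → ℝ → ℝ)
    (hu : ∀ x y t, u x y t = (V (x + y * Complex.I) t).re)
    (hv : ∀ x y t, v x y t = -(V (x + y * Complex.I) t).im)
    (hp : ∀ x y t, p x y t = -(v x y t) ^ 2) :
    ∀ x y t : ℝ, (x + y * Complex.I : ℂ) ∈ Ω →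
      (deriv (fun s => u x y s) t
        + u x y t * deriv (fun x' => u x' y t) x
        + v x y t * deriv (fun y' => u x y' t) y
        + deriv (fun x' => p x' y t) x = 0) ∧
      (deriv (fun s => v x y s) t
        + u x y t * deriv (fun x' => v x' y t) x
        + v x y t * deriv (fun y' => v x y' t) y
        + deriv (fun y' => p x y' t) y = 0) ∧
      (deriv (fun x' => u x' y t) x + deriv (fun y' => v x y' t) y = 0) := by
  intro x y t hz
  have hVz : HasDerivAt (fun z => V z t) (deriv (fun z => V z t) (x + y * I)) (x + y * I) :=
    ((hhol t _ hz).differentiableAt (hΩ.mem_nhds hz)).hasDerivAt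
  set W := deriv (fun z => V z t) (x + y * I)
  have hVx := hVz.comp_horizontal
  have hVy := hVz.comp_vertical
  have hVs := hVt _ hz t
  have hut : HasDerivAt (fun s => u x y s) (Vt (x + y * I) t).re t := by
    simpa only [hu] using hVs.re
  have hvt : HasDerivAt (fun s => v x y s) (-(Vt (x + y * I) t).im) t := by
    simpa only [hv] using hVs.im.fun_neg
  have hux : HasDerivAt (fun x' => u x' y t) W.re x := by simpa only [hu] using hVx.re
  have hvx : HasDerivAt (fun x' => v x' y t) (-W.im) x := by simpa only [hv] using hVx.im.fun_neg
  have huy : HasDerivAt (fun y' => u x y' t) (-W.im) y := by simpa [hu] using hVy.re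
  have hvy : HasDerivAt (fun y' => v x y' t) (-W.re) y := by simpa [hv] using hVy.im.fun_neg
  have hpx : HasDerivAt (fun x' => p x' y t) (-(2 * v x y t * -W.im)) x := by
    simpa [hp] using (hvx.fun_pow 2).fun_neg
  have hpy : HasDerivAt (fun y' => p x y' t) (-(2 * v x y t * -W.re)) y := by
    simpa [hp] using (hvy.fun_pow 2).fun_neg
  have hHopf_re := congrArg re (hHopf _ hz t)
  have hHopf_im := congrArg im (hHopf _ hz t)
  simp only [add_re, add_im, mul_re, mul_im, zero_re, zero_im] at hHopf_re hHopf_im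
  rw [hut.deriv, hvt.deriv, hux.deriv, hvx.deriv, huy.deriv, hvy.deriv, hpx.deriv, hpy.deriv,
    hu, hv]
  refine ⟨?_, ?_, ?_⟩
  · linear_combination hHopf_re
  · linear_combination -hHopf_im
  · ring
end

section
/- Let σ₀ ∈ ℝ, σ_j = ±1, and suppose a : I → ℝ₊ᵈ satisfies the geodesic equations ä_j = βσ_j/a_j with β as in Proposition (β·∑σ_j/a_j² = ∑ȧ_j²/a_j²) and ∏a_j constant. Define φ(x,t) = ½∑_j α_j(t)x_j² − λ(t) with α_j = ȧ_j/a_j and λ̇ = ½βσ₀, and p(x,t) = (β/2)(σ₀ − S(x,a)) with S(x,a) = ∑σ_j x_j²/a_j². Then Δφ = 0, and the Bernoulli equation φ_t + ½|∇φ|² + p = 0 holds pointwise, and p = 0 on {S(x,a) = σ₀}. -/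
/-!
Since `∏ a_j` is constant, `∑ log a_j` is constant, and differentiating gives `∑ ȧ_j/a_j = 0`,
which is `Δφ = 0`. Each `α_j = ȧ_j/a_j` satisfies the Riccati identity `α̇_j + α_j² = ä_j/a_j`,
which the geodesic equation turns into `βσ_j/a_j²`; summed against `x_j²/2` this is `½ β S(x,a)`,
while `λ̇ = ½ βσ₀`, so `φ_t + ½|∇φ|² = -p`.
-/

open Finset

theorem sum_div_eq_zero_of_prod_const {ι : Type*} (s : Finset ι) {a a' : ℝ → ι → ℝ} {t : ℝ}
    (hne : ∀ u j, a u j ≠ 0) (ha' : ∀ j, HasDerivAt (fun u => a u j) (a' t j) t)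
    (hprod : ∀ u, ∏ j ∈ s, a u j = ∏ j ∈ s, a t j) :
    ∑ j ∈ s, a' t j / a t j = 0 := by
  have hlog : HasDerivAt (fun u => ∑ j ∈ s, Real.log (a u j)) (∑ j ∈ s, a' t j / a t j) t :=
    HasDerivAt.fun_sum fun j _ => (ha' j).log (hne t j)
  have hconst : (fun u => ∑ j ∈ s, Real.log (a u j)) = fun _ => ∑ j ∈ s, Real.log (a t j) := by
    funext u
    rw [← Real.log_prod fun j _ => hne u j, hprod u, Real.log_prod fun j _ => hne t j]
  rw [hconst] at hlog
  exact hlog.unique (hasDerivAt_const t _)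

theorem HasDerivAt.div_self_deriv {f f' : ℝ → ℝ} {f'' t : ℝ} (hf : HasDerivAt f (f' t) t)
    (hf' : HasDerivAt f' f'' t) (h0 : f t ≠ 0) :
    HasDerivAt (fun s => f' s / f s) (f'' / f t - (f' t / f t) ^ 2) t := by
  refine (hf'.div hf h0).congr_deriv ?_
  field_simp

theorem stmt_16_general (d : ℕ) (σ : Fin d → ℝ)
    (σ₀ : ℝ) (a a' a'' : ℝ → Fin d → ℝ) (β lam : ℝ → ℝ)
    (φ p : (Fin d → ℝ) → ℝ → ℝ)
    (hpos : ∀ t j, 0 < a t j)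
    (ha' : ∀ t j, HasDerivAt (fun s => a s j) (a' t j) t)
    (ha'' : ∀ t j, HasDerivAt (fun s => a' s j) (a'' t j) t)
    (hgeo : ∀ t j, a'' t j = β t * σ j / a t j)
    (hprod : ∀ s t : ℝ, ∏ j, a s j = ∏ j, a t j)
    (hlam : ∀ t, HasDerivAt lam (β t * σ₀ / 2) t)
    (hφ : ∀ x t, φ x t = (1 / 2) * (∑ j, (a' t j / a t j) * (x j) ^ 2) - lam t)
    (hp : ∀ x t, p x t = (β t / 2) * (σ₀ - ∑ j, σ j * (x j) ^ 2 / (a t j) ^ 2)) :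
    (∀ t, ∑ j, a' t j / a t j = 0) ∧
    (∀ (x : Fin d → ℝ) (t : ℝ),
      deriv (fun s => φ x s) t
        + (1 / 2) * (∑ j, ((a' t j / a t j) * x j) ^ 2)
        + p x t = 0) ∧
    (∀ (x : Fin d → ℝ) (t : ℝ),
      (∑ j, σ j * (x j) ^ 2 / (a t j) ^ 2) = σ₀ → p x t = 0) := by
  refine ⟨fun t => sum_div_eq_zero_of_prod_const _ (fun u j => (hpos u j).ne') (ha' t)
    fun u => hprod u t, ?_, ?_⟩
  · intro x t
    have hφ' : HasDerivAt (fun s => φ x s)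
        ((1 / 2) * ∑ j, (a'' t j / a t j - (a' t j / a t j) ^ 2) * x j ^ 2 - β t * σ₀ / 2) t := by
      simp only [hφ]
      exact ((HasDerivAt.fun_sum fun j _ => ((ha' t j).div_self_deriv (ha'' t j)
        (hpos t j).ne').mul_const _).const_mul _).sub (hlam t)
    have hsum : ∑ j, (a'' t j / a t j - (a' t j / a t j) ^ 2) * x j ^ 2
        + ∑ j, ((a' t j / a t j) * x j) ^ 2 = β t * ∑ j, σ j * x j ^ 2 / a t j ^ 2 := by
      rw [← sum_add_distrib, mul_sum]
      refine sum_congr rfl fun j _ => ?_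
      have ha := (hpos t j).ne'
      rw [hgeo t j]
      field_simp
      ring
    rw [hφ'.deriv, hp]
    linear_combination (1 / 2) * hsum
  · intro x t hS
    rw [hp, hS, sub_self, mul_zero]

/-- Verification of the Dirichlet conic solutions: if a(t) solves the geodesic
equations ä_j = βσ_j/a_j with β·∑σ_j/a_j² = ∑ȧ_j²/a_j² and ∏a_j constant,
and φ(x,t) = ½∑(ȧ_j/a_j)x_j² − λ(t) with λ̇ = ½βσ₀, and
p(x,t) = (β/2)(σ₀ − S(x,a)) with S(x,a) = ∑σ_j x_j²/a_j², then Δφ = 0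
(i.e. ∑ ȧ_j/a_j = 0), the Bernoulli equation φ_t + ½|∇φ|² + p = 0 holds
pointwise, and p = 0 on the surface {S(x,a) = σ₀}. -/
theorem stmt_16 (d : ℕ) (σ : Fin d → ℝ) (hσ : ∀ j, σ j = 1 ∨ σ j = -1)
    (σ₀ : ℝ) (a a' a'' : ℝ → Fin d → ℝ) (β lam : ℝ → ℝ)
    (φ p : (Fin d → ℝ) → ℝ → ℝ)
    (hpos : ∀ t j, 0 < a t j)
    (ha' : ∀ t j, HasDerivAt (fun s => a s j) (a' t j) t)
    (ha'' : ∀ t j, HasDerivAt (fun s => a' s j) (a'' t j) t)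
    (hgeo : ∀ t j, a'' t j = β t * σ j / a t j)
    (hβ : ∀ t, β t * (∑ j, σ j / (a t j) ^ 2) = ∑ j, (a' t j) ^ 2 / (a t j) ^ 2)
    (hprod : ∀ s t : ℝ, ∏ j, a s j = ∏ j, a t j)
    (hlam : ∀ t, HasDerivAt lam (β t * σ₀ / 2) t)
    (hφ : ∀ x t, φ x t = (1 / 2) * (∑ j, (a' t j / a t j) * (x j) ^ 2) - lam t)
    (hp : ∀ x t, p x t = (β t / 2) * (σ₀ - ∑ j, σ j * (x j) ^ 2 / (a t j) ^ 2)) :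
    (∀ t, ∑ j, a' t j / a t j = 0) ∧
    (∀ (x : Fin d → ℝ) (t : ℝ),
      deriv (fun s => φ x s) t
        + (1 / 2) * (∑ j, ((a' t j / a t j) * x j) ^ 2)
        + p x t = 0) ∧
    (∀ (x : Fin d → ℝ) (t : ℝ),
      (∑ j, σ j * (x j) ^ 2 / (a t j) ^ 2) = σ₀ → p x t = 0) :=
  stmt_16_general d σ σ₀ a a' a'' β lam φ p hpos ha' ha'' hgeo hprod hlam hφ hp
end

section
/- The parametrized curve z(u) = tu + u/(u²+1) − i/(u²+1), u ∈ ℝ (the Zubarev–Karabut interface at time t), is a graph over x for every t < −1: the map u ↦ x(u) = tu + u/(u²+1) is strictly decreasing on ℝ. At t = −1, x'(0) = x''(0) = 0 while x'''(0) ≠ 0, and near u = 0 the curve satisfies y + 1 = u² + O(u⁴) and x = O(u³), so y ~ −1 + c|x|^{2/3} (a cusp forms). -/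
/-!
With x_t(u) = t u + u/(u²+1) one has x_t'(u) = t + (1 - u²)/(u²+1)², whose rational term is at
most 1 (numerator ≤ 1 ≤ denominator), so x_t' < 0 for t < -1. The second derivative
2u(u² - 3)/(u²+1)³ does not depend on t and vanishes at 0, and x_t'''(0) = -6. At t = -1 both
x and y + 1 - u² are monomials (-u³ resp. -u⁴) divided by u² + 1 ≥ 1.
-/

open Asymptotics

lemma hasDerivAt_div_sq_add_one (u : ℝ) :
    HasDerivAt (fun u : ℝ => u / (u ^ 2 + 1)) ((1 - u ^ 2) / (u ^ 2 + 1) ^ 2) u := by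
  have hden : HasDerivAt (fun u : ℝ => u ^ 2 + 1) (2 * u) u := by
    simpa using (hasDerivAt_pow 2 u).add_const 1
  exact ((hasDerivAt_id' u).fun_div hden (by positivity)).congr_deriv (by ring)

lemma hasDerivAt_one_sub_sq_div_sq_add_one_sq (u : ℝ) :
    HasDerivAt (fun u : ℝ => (1 - u ^ 2) / (u ^ 2 + 1) ^ 2)
      (2 * u * (u ^ 2 - 3) / (u ^ 2 + 1) ^ 3) u := by
  have hnum : HasDerivAt (fun u : ℝ => 1 - u ^ 2) (-(2 * u)) u := by
    simpa using (hasDerivAt_pow 2 u).const_sub 1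
  have hden : HasDerivAt (fun u : ℝ => (u ^ 2 + 1) ^ 2) (2 * (u ^ 2 + 1) * (2 * u)) u := by
    simpa using ((hasDerivAt_pow 2 u).add_const 1).fun_pow 2
  refine (hnum.fun_div hden (by positivity)).congr_deriv ?_
  field_simp
  ring

lemma hasDerivAt_two_mul_mul_sq_sub_three_div (u : ℝ) :
    HasDerivAt (fun u : ℝ => 2 * u * (u ^ 2 - 3) / (u ^ 2 + 1) ^ 3)
      (-6 * (u ^ 4 - 6 * u ^ 2 + 1) / (u ^ 2 + 1) ^ 4) u := by
  have hnum : HasDerivAt (fun u : ℝ => 2 * u * (u ^ 2 - 3)) (6 * u ^ 2 - 6) u :=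
    (((hasDerivAt_id' u).const_mul 2).fun_mul ((hasDerivAt_pow 2 u).sub_const 3)).congr_deriv
      (by ring)
  have hden : HasDerivAt (fun u : ℝ => (u ^ 2 + 1) ^ 3) (3 * (u ^ 2 + 1) ^ 2 * (2 * u)) u := by
    simpa using ((hasDerivAt_pow 2 u).add_const 1).fun_pow 3
  refine (hnum.fun_div hden (by positivity)).congr_deriv ?_
  field_simp
  ring

lemma div_sq_add_one_isBigO {f : ℝ → ℝ} (l : Filter ℝ) :
    (fun u => f u / (u ^ 2 + 1)) =O[l] f := by
  refine isBigO_of_le _ fun u => ?_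
  rw [norm_div, Real.norm_of_nonneg (by positivity : (0 : ℝ) ≤ u ^ 2 + 1)]
  exact div_le_self (norm_nonneg _) (by nlinarith)

/-- The abscissa x_t(u) of the Zubarev–Karabut interface at time t. -/
noncomputable def interfaceX (t u : ℝ) : ℝ := t * u + u / (u ^ 2 + 1)

lemma hasDerivAt_interfaceX (t u : ℝ) :
    HasDerivAt (interfaceX t) (t + (1 - u ^ 2) / (u ^ 2 + 1) ^ 2) u :=
  ((hasDerivAt_id u).const_mul t).add (hasDerivAt_div_sq_add_one u) |>.congr_deriv (by simp)

lemma deriv_interfaceX (t : ℝ) :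
    deriv (interfaceX t) = fun u => t + (1 - u ^ 2) / (u ^ 2 + 1) ^ 2 :=
  funext fun u => (hasDerivAt_interfaceX t u).deriv

lemma deriv_deriv_interfaceX (t : ℝ) :
    deriv (deriv (interfaceX t)) = fun u => 2 * u * (u ^ 2 - 3) / (u ^ 2 + 1) ^ 3 := by
  rw [deriv_interfaceX]
  exact funext fun u => ((hasDerivAt_one_sub_sq_div_sq_add_one_sq u).const_add t).deriv

lemma iteratedDeriv_interfaceX_zero (t : ℝ) :
    iteratedDeriv 1 (interfaceX t) 0 = t + 1 ∧
    iteratedDeriv 2 (interfaceX t) 0 = 0 ∧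
    iteratedDeriv 3 (interfaceX t) 0 = -6 := by
  simp only [iteratedDeriv_eq_iterate, Function.iterate_succ, Function.iterate_zero,
    Function.comp_apply, id]
  rw [deriv_deriv_interfaceX, (hasDerivAt_two_mul_mul_sq_sub_three_div 0).deriv, deriv_interfaceX]
  norm_num

lemma strictAnti_interfaceX {t : ℝ} (ht : t < -1) : StrictAnti (interfaceX t) := by
  refine strictAnti_of_deriv_neg fun u => ?_
  have hle : (1 - u ^ 2) / (u ^ 2 + 1) ^ 2 ≤ 1 := by
    rw [div_le_one (by positivity)]
    nlinarith [sq_nonneg u]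
  rw [deriv_interfaceX]
  linarith

/-- The Zubarev–Karabut interface z(u) = tu + u/(u²+1) − i/(u²+1):
for t < −1 the map u ↦ x(u) = tu + u/(u²+1) is strictly decreasing (the
interface is a graph over x); at t = −1 one has x'(0) = x''(0) = 0 while
x'''(0) = −6 ≠ 0, and near u = 0, y + 1 = u² + O(u⁴) while x = O(u³)
(a 2/3-power cusp forms). -/
theorem stmt_19 :
    (∀ t : ℝ, t < -1 →
      StrictAnti (fun u : ℝ => t * u + u / (u ^ 2 + 1))) ∧
    (iteratedDeriv 1 (fun u : ℝ => (-1) * u + u / (u ^ 2 + 1)) 0 = 0 ∧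
     iteratedDeriv 2 (fun u : ℝ => (-1) * u + u / (u ^ 2 + 1)) 0 = 0 ∧
     iteratedDeriv 3 (fun u : ℝ => (-1) * u + u / (u ^ 2 + 1)) 0 = -6) ∧
    ((fun u : ℝ => (-1) / (u ^ 2 + 1) + 1 - u ^ 2)
        =O[nhds (0 : ℝ)] fun u : ℝ => u ^ 4) ∧
    ((fun u : ℝ => (-1) * u + u / (u ^ 2 + 1))
        =O[nhds (0 : ℝ)] fun u : ℝ => u ^ 3) := by
  obtain ⟨h1, h2, h3⟩ := iteratedDeriv_interfaceX_zero (-1)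
  refine ⟨fun t ht => strictAnti_interfaceX ht, ⟨h1.trans (by norm_num), h2, h3⟩, ?_, ?_⟩
  · exact (div_sq_add_one_isBigO _).neg_left.congr_left fun u => by
      field_simp
      ring
  · exact (div_sq_add_one_isBigO _).neg_left.congr_left fun u => by
      field_simp
      ring
end
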